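/- arXiv:2405.08424 — 4 statements merged into one kernel-verified Lean document; each statement's English description precedes it below -/
import Mathlib

section
/- Let f̃ : [0,1]^n → ℝ be entry-wise concave and let p_o ∈ [0,1]^n. Then there exists a point p_final such that: (G1) p_final ∈ {0,1}^n is discrete; (G2) f̃(p_final) ≤ f̃(p_o); and (G3) p_final is a local minimum with respect to local derandomizations, i.e., f̃(p_final) ≤ f̃(der(i,x;p_final)) for every i ∈ [n] and x ∈ {0,1}. -/
open Finset

/-- goodness of greedy derandomization.  For any entry-wise concave
`f̃ : [0,1]^n → ℝ` and any `p_o ∈ [0,1]^n`, there is a point `p_final` that is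
(G1) discrete, (G2) no worse than `p_o`, and (G3) a local minimum w.r.t. local
derandomizations. -/
theorem greedy_derandomization_good
    (n : ℕ) (f : (Fin n → ℝ) → ℝ)
    (hconc : ∀ p : Fin n → ℝ, (∀ v, p v ∈ Set.Icc (0 : ℝ) 1) → ∀ i : Fin n,
      p i * f (Function.update p i 1) + (1 - p i) * f (Function.update p i 0) ≤ f p)
    (po : Fin n → ℝ) (hpo : ∀ v, po v ∈ Set.Icc (0 : ℝ) 1) :
    ∃ pf : Fin n → ℝ,
      (∀ v, pf v = 0 ∨ pf v = 1) ∧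
      f pf ≤ f po ∧
      (∀ i : Fin n, ∀ x : ℝ, (x = 0 ∨ x = 1) → f pf ≤ f (Function.update pf i x)) := by
  classical
  -- one derandomization step
  have step : ∀ p : Fin n → ℝ, (∀ v, p v ∈ Set.Icc (0 : ℝ) 1) → ∀ i : Fin n,
      ∃ x : ℝ, (x = 0 ∨ x = 1) ∧ f (Function.update p i x) ≤ f p := by
    intro p hp i
    have h := hconc p hp i
    have hpi := hp i
    rcases le_total (f (Function.update p i 1)) (f (Function.update p i 0)) with hle | hle
    · refine ⟨1, Or.inr rfl, ?_⟩
      calc f (Function.update p i 1)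
          = p i * f (Function.update p i 1) + (1 - p i) * f (Function.update p i 1) := by ring
        _ ≤ p i * f (Function.update p i 1) + (1 - p i) * f (Function.update p i 0) := by
            have : (0:ℝ) ≤ 1 - p i := by linarith [hpi.2]
            nlinarith
        _ ≤ f p := h
    · refine ⟨0, Or.inl rfl, ?_⟩
      calc f (Function.update p i 0)
          = p i * f (Function.update p i 0) + (1 - p i) * f (Function.update p i 0) := by ring
        _ ≤ p i * f (Function.update p i 1) + (1 - p i) * f (Function.update p i 0) := by
            nlinarith [hpi.1]
        _ ≤ f p := h
  -- iterate to fully derandomize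
  have key : ∀ k : ℕ, ∀ p : Fin n → ℝ, (∀ v, p v ∈ Set.Icc (0 : ℝ) 1) →
      ∃ q : Fin n → ℝ, (∀ v, q v ∈ Set.Icc (0 : ℝ) 1) ∧
        (∀ i : Fin n, i.val < k → q i = 0 ∨ q i = 1) ∧ f q ≤ f p := by
    intro k
    induction k with
    | zero => intro p hp; exact ⟨p, hp, fun i h => absurd h (Nat.not_lt_zero _), le_refl _⟩
    | succ k ih =>
      intro p hp
      obtain ⟨q, hq, hdisc, hle⟩ := ih p hp
      by_cases hk : k < n
      · obtain ⟨x, hx, hfx⟩ := step q hq ⟨k, hk⟩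
        refine ⟨Function.update q ⟨k, hk⟩ x, ?_, ?_, le_trans hfx hle⟩
        · intro v
          by_cases hv : v = ⟨k, hk⟩
          · subst hv; simp [Function.update_self]
            rcases hx with h | h <;> simp [h]
          · simp [Function.update_of_ne hv]; exact hq v
        · intro i hi
          by_cases hv : i = ⟨k, hk⟩
          · subst hv; simpa [Function.update_self] using hx
          · rw [Function.update_of_ne hv]
            apply hdisc
            have : i.val ≠ k := fun h => hv (Fin.ext h)
            omega
      · refine ⟨q, hq, fun i _ => hdisc i ?_, hle⟩
        omega
  obtain ⟨q, hq, hdisc, hle⟩ := key n po hpo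
  have hqd : ∀ v, q v = 0 ∨ q v = 1 := fun v => hdisc v v.isLt
  -- minimize over discrete points
  set g : (Fin n → Bool) → ℝ := fun b => f (fun i => if b i then 1 else 0) with hg
  obtain ⟨b₀, -, hb₀⟩ := Finset.exists_min_image (Finset.univ : Finset (Fin n → Bool)) g
    ⟨Classical.arbitrary _, Finset.mem_univ _⟩
  set pf : Fin n → ℝ := fun i => if b₀ i then 1 else 0 with hpf
  have hmin : ∀ r : Fin n → ℝ, (∀ v, r v = 0 ∨ r v = 1) → f pf ≤ f r := by
    intro r hr
    have : r = fun i => if (decide (r i = 1)) then 1 else 0 := by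
      funext i
      rcases hr i with h | h <;> simp [h]
    rw [this]
    exact hb₀ _ (Finset.mem_univ _)
  have hpfd : ∀ v, pf v = 0 ∨ pf v = 1 := by
    intro v; by_cases h : b₀ v <;> simp [hpf, h]
  refine ⟨pf, hpfd, le_trans (hmin q hqd) hle, ?_⟩
  intro i x hx
  apply hmin
  intro v
  by_cases hv : v = i
  · subst hv; simpa [Function.update_self] using hx
  · rw [Function.update_of_ne hv]; exact hpfd v
end

section
/- For every p ∈ [0,1]^n, every i ∈ [n], and every 0 ≤ t ≤ n − 1: if p_i ≠ 1 then q′_t = (1 − p_i)^{−1} · Σ_{s=0}^{t} q_s · (p_i/(p_i − 1))^{t−s}, and if p_i ≠ 0 then q′_t = (p_i)^{−1} · Σ_{s=0}^{n−t−1} q_{t+s+1} · ((p_i − 1)/p_i)^{s}, where q_s := Pr_{X∼p}[ |V_X| = s ] and q′_t := Pr_{X∼p}[ |V_X ∖ {i}| = t ]. -/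
open Finset

/-- `Pr_p[X] = ∏_{v ∈ V_X} p_v · ∏_{u ∉ V_X} (1 - p_u)`. -/
noncomputable def prOf {n : ℕ} (p : Fin n → ℝ) (X : Fin n → Bool) : ℝ :=
  ∏ v, if X v then p v else 1 - p v

/-- The chosen subset `V_X = {v : X_v = 1}`. -/
def chosen {n : ℕ} (X : Fin n → Bool) : Finset (Fin n) :=
  Finset.univ.filter (fun v => X v = true)

/-- `q_t = Pr_{X∼p}[|V_X| = t]`. -/
noncomputable def qcard {n : ℕ} (p : Fin n → ℝ) (t : ℤ) : ℝ :=
  ∑ X ∈ Finset.univ.filter (fun X : Fin n → Bool => ((chosen X).card : ℤ) = t), prOf p X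

/-- `q′_t = Pr_{X∼p}[|V_X ∖ {i}| = t]`. -/
noncomputable def qcardErase {n : ℕ} (p : Fin n → ℝ) (i : Fin n) (s : ℤ) : ℝ :=
  ∑ X ∈ Finset.univ.filter
      (fun X : Fin n → Bool => (((chosen X).erase i).card : ℤ) = s), prOf p X

/-!
Splitting off the coordinate `i` writes `X` as `i.insertNth b Y` with `Y` a tuple on the other
`n - 1` coordinates, so `q′` is the law of `|V_Y|` for `p ∘ i.succAbove`, and `q` is its
convolution with a Bernoulli(`p i`) variable: `q_t = p_i q′_{t-1} + (1 - p_i) q′_t`.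
Solving this recurrence upwards from `q′_{-1} = 0` (dividing by `1 - p_i`) or downwards from
`q′_n = 0` (dividing by `p_i`) gives the two formulas.
-/

theorem sum_pi_eq_sum_sum_insertNth {M α : Type*} [AddCommMonoid M] [Fintype α] {n : ℕ}
    (i : Fin (n + 1)) (f : (Fin (n + 1) → α) → M) :
    ∑ X, f X = ∑ b, ∑ Y : Fin n → α, f (i.insertNth b Y) := by
  rw [← (Fin.insertNthEquiv (fun _ => α) i).sum_comp, Fintype.sum_prod_type]
  rfl

section InsertNth

variable {n : ℕ} (i : Fin (n + 1)) (b : Bool) (Y : Fin n → Bool)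

theorem card_chosen_insertNth : (chosen (i.insertNth b Y)).card = (chosen Y).card + b.toNat := by
  simp only [chosen, Finset.card_filter]
  rw [Fin.sum_univ_succAbove _ i]
  cases b <;> simp [add_comm]

theorem card_erase_chosen_insertNth :
    ((chosen (i.insertNth b Y)).erase i).card = (chosen Y).card := by
  rw [Finset.card_erase_eq_ite, card_chosen_insertNth]
  cases b <;> simp [chosen]

theorem prOf_insertNth (p : Fin (n + 1) → ℝ) :
    prOf p (i.insertNth b Y) = (if b then p i else 1 - p i) * prOf (p ∘ i.succAbove) Y := by
  simp only [prOf]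
  rw [Fin.prod_univ_succAbove _ i]
  simp

end InsertNth

theorem qcard_eq_zero {n : ℕ} (p : Fin n → ℝ) {t : ℤ} (ht : t < 0 ∨ n < t) : qcard p t = 0 := by
  refine Finset.sum_eq_zero fun X hX => absurd (Finset.mem_filter.1 hX).2 ?_
  have := (chosen X).card_le_univ
  rw [Fintype.card_fin] at this
  omega

theorem qcardErase_eq_qcard_succAbove {n : ℕ} (p : Fin (n + 1) → ℝ) (i : Fin (n + 1)) (s : ℤ) :
    qcardErase p i s = qcard (p ∘ i.succAbove) s := by
  simp only [qcardErase, qcard, Finset.sum_filter]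
  rw [sum_pi_eq_sum_sum_insertNth i, Fintype.sum_bool, ← Finset.sum_add_distrib]
  refine Finset.sum_congr rfl fun Y _ => ?_
  simp only [card_erase_chosen_insertNth, prOf_insertNth, if_true, Bool.false_eq_true, if_false]
  split_ifs <;> ring

theorem qcard_eq_mul_qcard_succAbove_add_mul {n : ℕ} (p : Fin (n + 1) → ℝ) (i : Fin (n + 1))
    (t : ℤ) :
    qcard p t
      = p i * qcard (p ∘ i.succAbove) (t - 1) + (1 - p i) * qcard (p ∘ i.succAbove) t := by
  simp only [qcard, Finset.sum_filter, Finset.mul_sum, ← Finset.sum_add_distrib]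
  rw [sum_pi_eq_sum_sum_insertNth i, Fintype.sum_bool, ← Finset.sum_add_distrib]
  refine Finset.sum_congr rfl fun Y _ => ?_
  simp only [card_chosen_insertNth, prOf_insertNth, if_true, Bool.false_eq_true, if_false,
    Bool.toNat_true, Bool.toNat_false, add_zero]
  push_cast
  split_ifs <;> first | omega | ring

section MixtureRecurrence

variable {K : Type*} [Field K] {a q : ℤ → K} {r : K}

theorem eq_of_mixture_recurrence_of_eq_zero_below (hr : r ≠ 1) (ha : a (-1) = 0)
    (hq : ∀ t, q t = r * a (t - 1) + (1 - r) * a t) (t : ℕ) :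
    a t = (1 - r)⁻¹ * ∑ s ∈ range (t + 1), q s * (r / (r - 1)) ^ (t - s) := by
  rw [eq_inv_mul_iff_mul_eq₀ (sub_ne_zero.2 hr.symm)]
  induction t with
  | zero => simpa [ha] using (hq 0).symm
  | succ t ih =>
    have hshift : ∑ s ∈ range (t + 1), q s * (r / (r - 1)) ^ (t + 1 - s)
        = r / (r - 1) * ∑ s ∈ range (t + 1), q s * (r / (r - 1)) ^ (t - s) := by
      rw [Finset.mul_sum]
      refine Finset.sum_congr rfl fun s hs => ?_
      rw [Nat.sub_add_comm (Finset.mem_range_succ_iff.1 hs), pow_succ]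
      ring
    rw [Finset.sum_range_succ, hshift, ← ih, Nat.sub_self, pow_zero, mul_one, hq]
    push_cast
    rw [add_sub_cancel_right]
    field_simp [sub_ne_zero.2 hr]
    ring

theorem eq_of_mixture_recurrence_of_eq_zero_above (hr : r ≠ 0) {N : ℕ}
    (ha : ∀ t : ℕ, N ≤ t → a t = 0) (hq : ∀ t, q t = r * a (t - 1) + (1 - r) * a t) (t : ℕ) :
    a t = r⁻¹ * ∑ s ∈ range (N - t), q (t + s + 1) * ((r - 1) / r) ^ s := by
  rw [eq_inv_mul_iff_mul_eq₀ hr]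
  induction h : N - t generalizing t with
  | zero => simp [ha t (by omega)]
  | succ m ih =>
    have hshift : ∑ s ∈ range m, q ((t : ℤ) + (s + 1 : ℕ) + 1) * ((r - 1) / r) ^ (s + 1)
        = (r - 1) / r * ∑ s ∈ range m, q (((t + 1 : ℕ) : ℤ) + s + 1) * ((r - 1) / r) ^ s := by
      rw [Finset.mul_sum]
      refine Finset.sum_congr rfl fun s _ => ?_
      push_cast
      ring_nf
    rw [Finset.sum_range_succ', hshift, ← ih (t + 1) (by omega), hq]
    push_cast
    rw [add_zero, add_sub_cancel_right]
    field_simp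
    ring

end MixtureRecurrence

theorem poisson_binomial_removal_formulas_general
    (n : ℕ) (p : Fin n → ℝ) (i : Fin n) (t : ℕ) :
    (p i ≠ 1 →
      qcardErase p i (t : ℤ)
        = (1 - p i)⁻¹ *
            ∑ s ∈ Finset.range (t + 1), qcard p (s : ℤ) * (p i / (p i - 1)) ^ (t - s)) ∧
    (p i ≠ 0 →
      qcardErase p i (t : ℤ)
        = (p i)⁻¹ *
            ∑ s ∈ Finset.range (n - t), qcard p ((t : ℤ) + s + 1) * ((p i - 1) / p i) ^ s) := by
  cases n with
  | zero => exact i.elim0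
  | succ n =>
    have hrec := qcard_eq_mul_qcard_succAbove_add_mul p i
    rw [qcardErase_eq_qcard_succAbove]
    exact ⟨fun hi => eq_of_mixture_recurrence_of_eq_zero_below hi
        (qcard_eq_zero _ (Or.inl (by norm_num))) hrec t,
      fun hi => eq_of_mixture_recurrence_of_eq_zero_above hi
        (fun s hs => qcard_eq_zero _ (Or.inr (by omega))) hrec t⟩

/-- the two explicit solutions of the one-node-removal recursion:
for `0 ≤ t ≤ n − 1`, if `p_i ≠ 1` then
`q′_t = (1 − p_i)⁻¹ · Σ_{s=0}^{t} q_s · (p_i/(p_i − 1))^{t−s}`, and if `p_i ≠ 0` then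
`q′_t = p_i⁻¹ · Σ_{s=0}^{n−t−1} q_{t+s+1} · ((p_i − 1)/p_i)^{s}`. -/
theorem poisson_binomial_removal_formulas
    (n : ℕ) (p : Fin n → ℝ) (hp : ∀ v, p v ∈ Set.Icc (0 : ℝ) 1) (i : Fin n)
    (t : ℕ) (ht : t < n) :
    (p i ≠ 1 →
      qcardErase p i (t : ℤ)
        = (1 - p i)⁻¹ *
            ∑ s ∈ Finset.range (t + 1), qcard p (s : ℤ) * (p i / (p i - 1)) ^ (t - s)) ∧
    (p i ≠ 0 →
      qcardErase p i (t : ℤ)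
        = (p i)⁻¹ *
            ∑ s ∈ Finset.range (n - t), qcard p ((t : ℤ) + s + 1) * ((p i - 1) / p i) ^ s) :=
  poisson_binomial_removal_formulas_general n p i t
end

section
/- Let d = {0,…,c−1}, let S := {p ∈ [0,1]^{n×c} : Σ_{r∈d} p_{i,r} = 1 for all i ∈ [n]}, let f̃ : S → ℝ be entry-wise concave in the non-binary sense, and let p_init ∈ S. Then there exists p_final ∈ S such that: (1) p_final is discrete, i.e., every row of p_final is the indicator of some color (so p_final corresponds to some X ∈ d^n); (2) f̃(p_final) ≤ f̃(p_init); and (3) p_final is a local minimum with respect to local derandomizations, i.e., f̃(p_final) ≤ f̃(der(i,x;p_final)) for every i ∈ [n] and x ∈ d. -/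
open Finset

/-- Local derandomization for non-binary decisions: row `i` of `p` is replaced by the
indicator of color `x`. -/
noncomputable def derMat {n c : ℕ} (p : Fin n → Fin c → ℝ) (i : Fin n) (x : Fin c) :
    Fin n → Fin c → ℝ :=
  Function.update p i (fun y => if y = x then 1 else 0)

/-- non-binary greedy derandomization.  For any `f̃` that is entry-wise
concave in the non-binary sense on the set `S` of row-stochastic matrices with entries in
`[0,1]`, and any `p_init ∈ S`, there exists `p_final ∈ S` that is (1) discrete (each row is
the indicator of some color), (2) no worse than `p_init`, and (3) a local minimum w.r.t.
local derandomizations. -/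
theorem nonbinary_greedy_derandomization_good
    (n c : ℕ) (f : (Fin n → Fin c → ℝ) → ℝ)
    (hconc : ∀ p : Fin n → Fin c → ℝ,
      (∀ v r, p v r ∈ Set.Icc (0 : ℝ) 1) → (∀ v, ∑ r, p v r = 1) →
      ∀ i : Fin n, ∑ r : Fin c, p i r * f (derMat p i r) ≤ f p)
    (pinit : Fin n → Fin c → ℝ)
    (h1 : ∀ v r, pinit v r ∈ Set.Icc (0 : ℝ) 1) (h2 : ∀ v, ∑ r, pinit v r = 1) :
    ∃ pf : Fin n → Fin c → ℝ,
      (∀ v r, pf v r ∈ Set.Icc (0 : ℝ) 1) ∧ (∀ v, ∑ r, pf v r = 1) ∧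
      (∃ X : Fin n → Fin c, ∀ v r, pf v r = if r = X v then 1 else 0) ∧
      f pf ≤ f pinit ∧
      (∀ i : Fin n, ∀ x : Fin c, f pf ≤ f (derMat pf i x)) := by
  rcases Nat.eq_zero_or_pos n with hn | hn
  · subst hn
    exact ⟨pinit, h1, h2, ⟨Fin.elim0, fun v => v.elim0⟩, le_refl _, fun i => i.elim0⟩
  have hc : 0 < c := by
    rcases Nat.eq_zero_or_pos c with hc | hc
    · subst hc
      have := h2 ⟨0, hn⟩
      simp at this
    · exact hc
  -- at any row there is a color whose derandomization does not increase f
  have step : ∀ p : Fin n → Fin c → ℝ, (∀ v r, p v r ∈ Set.Icc (0:ℝ) 1) →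
      (∀ v, ∑ r, p v r = 1) → ∀ i : Fin n, ∃ x : Fin c, f (derMat p i x) ≤ f p := by
    intro p hp1 hp2 i
    by_contra hcon
    push_neg at hcon
    have hx0 : ∃ x : Fin c, 0 < p i x := by
      by_contra h
      push_neg at h
      have hle : ∑ r, p i r ≤ 0 := Finset.sum_nonpos (fun r _ => h r)
      rw [hp2 i] at hle; linarith
    obtain ⟨x0, hx0⟩ := hx0
    have hlt : ∑ r, p i r * f p < ∑ r, p i r * f (derMat p i r) := by
      apply Finset.sum_lt_sum
      · intro r _
        exact mul_le_mul_of_nonneg_left (le_of_lt (hcon r)) (hp1 i r).1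
      · exact ⟨x0, Finset.mem_univ _, mul_lt_mul_of_pos_left (hcon x0) hx0⟩
    have hsum : ∑ r, p i r * f p = f p := by
      rw [← Finset.sum_mul, hp2 i, one_mul]
    have := hconc p hp1 hp2 i
    linarith
  -- inductively derandomize the first k rows
  have main : ∀ k : ℕ, k ≤ n → ∃ p : Fin n → Fin c → ℝ,
      (∀ v r, p v r ∈ Set.Icc (0:ℝ) 1) ∧ (∀ v, ∑ r, p v r = 1) ∧
      (∀ v : Fin n, (v:ℕ) < k → ∃ x, ∀ r, p v r = if r = x then 1 else 0) ∧
      f p ≤ f pinit := by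
    intro k
    induction k with
    | zero =>
      intro _
      exact ⟨pinit, h1, h2, fun v hv => absurd hv (Nat.not_lt_zero _), le_refl _⟩
    | succ k ih =>
      intro hk
      obtain ⟨p, hp1, hp2, hpd, hpf⟩ := ih (Nat.le_of_succ_le hk)
      set i : Fin n := ⟨k, hk⟩ with hi
      obtain ⟨x, hx⟩ := step p hp1 hp2 i
      refine ⟨derMat p i x, ?_, ?_, ?_, le_trans hx hpf⟩
      · intro v r
        by_cases hvi : v = i
        · subst hvi
          simp only [derMat, Function.update_self]
          split <;> norm_num
        · simp only [derMat, Function.update_of_ne hvi]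
          exact hp1 v r
      · intro v
        by_cases hvi : v = i
        · subst hvi
          simp [derMat]
        · simp only [derMat, Function.update_of_ne hvi]
          exact hp2 v
      · intro v hv
        by_cases hvi : v = i
        · subst hvi
          exact ⟨x, fun r => by simp [derMat]⟩
        · have hvk : (v:ℕ) < k := by
            rcases Nat.lt_succ_iff_lt_or_eq.mp hv with h | h
            · exact h
            · exact absurd (Fin.ext h : v = i) hvi
          obtain ⟨y, hy⟩ := hpd v hvk
          exact ⟨y, fun r => by
            simp only [derMat, Function.update_of_ne hvi]; exact hy r⟩
  obtain ⟨q, hq1, hq2, hqd, hqf⟩ := main n (le_refl n)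
  choose Xq hXq using fun v : Fin n => hqd v v.isLt
  -- minimize f over all discrete matrices
  set disc : (Fin n → Fin c) → (Fin n → Fin c → ℝ) :=
    fun X v r => if r = X v then 1 else 0 with hdisc
  have hne : (Finset.univ : Finset (Fin n → Fin c)).Nonempty := by
    have : Nonempty (Fin n → Fin c) := ⟨fun _ => ⟨0, hc⟩⟩
    exact Finset.univ_nonempty
  obtain ⟨X0, -, hX0⟩ := Finset.exists_min_image Finset.univ (fun X => f (disc X)) hne
  have hq_eq : q = disc Xq := by
    funext v r; exact hXq v r
  refine ⟨disc X0, ?_, ?_, ⟨X0, fun v r => rfl⟩, ?_, ?_⟩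
  · intro v r
    simp only [disc]
    split <;> norm_num
  · intro v
    simp [disc]
  · calc f (disc X0) ≤ f (disc Xq) := hX0 Xq (Finset.mem_univ _)
      _ = f q := by rw [hq_eq]
      _ ≤ f pinit := hqf
  · intro i x
    have hder : derMat (disc X0) i x = disc (Function.update X0 i x) := by
      funext v r
      by_cases hvi : v = i
      · subst hvi
        simp [derMat, disc]
      · simp [derMat, disc, Function.update_of_ne hvi]
    rw [hder]
    exact hX0 _ (Finset.mem_univ _)
end

section
/- Let d = {0,…,c−1}, let f : d^n → ℝ be non-negative, let C ⊆ d^n be a set of feasible decisions, let S := {p ∈ [0,1]^{n×c} : Σ_{r∈d} p_{i,r} = 1 for all i}, and let f̃ : S → ℝ be non-negative, entry-wise concave in the non-binary sense, and satisfy f̃(p) ≥ E_{X∼p} f(X) + β · Pr_{X∼p}[X ∉ C] for all p ∈ S, where β > max(f̃(p_init), max_{X ∈ C} f(X)) for a given p_init ∈ S. Then there exists a discrete (deterministic) decision X ∈ d^n with X ∈ C and f(X) ≤ f̃(p_init); in other words, derandomizing p_init by entry-wise local derandomizations yields a feasible solution whose objective value is at most f̃(p_init). -/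
open Finset

/-- `Pr_p[X] = ∏_v p_{v, X_v}` for a non-binary decision `X : [n] → d`. -/
noncomputable def prMat {n c : ℕ} (p : Fin n → Fin c → ℝ) (X : Fin n → Fin c) : ℝ :=
  ∏ v, p v (X v)

/-!
Derandomize the rows one at a time. By entry-wise concavity `f̃(p)` dominates an average of the
values `f̃(der(i,r;p))` with weights `p_{i,r}`, so some choice of `r` does not increase `f̃`. After
all `n` rows are fixed, `p` is the point mass at a decision `X`, and the upper bound on `f̃` reads
`f(X) + β·[X ∉ C] ≤ f̃(p_init) < β`; since `f ≥ 0` this forces `X ∈ C`, and then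
`f(X) ≤ f̃(p_init)`.
-/

lemma exists_le_of_sum_mul_le {ι : Type*} [Fintype ι] {a g : ι → ℝ} {M : ℝ}
    (ha : ∀ r, 0 ≤ a r) (hs : ∑ r, a r = 1) (h : ∑ r, a r * g r ≤ M) :
    ∃ r, g r ≤ M := by
  have : Nonempty ι := by
    by_contra hempty
    simp [not_nonempty_iff.mp hempty] at hs
  obtain ⟨r₀, hr₀⟩ := Finite.exists_min g
  refine ⟨r₀, le_trans ?_ h⟩
  calc g r₀ = ∑ r, a r * g r₀ := by rw [← Finset.sum_mul, hs, one_mul]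
    _ ≤ ∑ r, a r * g r := sum_le_sum fun r _ => mul_le_mul_of_nonneg_left (hr₀ r) (ha r)

section Derandomization

variable {n c : ℕ}

def IsRowStochastic (p : Fin n → Fin c → ℝ) : Prop :=
  (∀ v r, p v r ∈ Set.Icc (0 : ℝ) 1) ∧ ∀ v, ∑ r, p v r = 1

def indMat (X : Fin n → Fin c) : Fin n → Fin c → ℝ :=
  fun v y => if y = X v then 1 else 0

lemma IsRowStochastic.derMat {p : Fin n → Fin c → ℝ} (hp : IsRowStochastic p)
    (i : Fin n) (x : Fin c) : IsRowStochastic (derMat p i x) := by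
  unfold _root_.derMat
  constructor
  · intro v y
    rcases eq_or_ne v i with rfl | hv
    · simp only [Function.update_self]
      split_ifs <;> simp
    · simpa [Function.update_of_ne hv] using hp.1 v y
  · intro v
    rcases eq_or_ne v i with rfl | hv
    · simp
    · simpa [Function.update_of_ne hv] using hp.2 v

lemma isRowStochastic_indMat (X : Fin n → Fin c) : IsRowStochastic (indMat X) := by
  constructor
  · intro v y
    simp only [indMat]
    split_ifs <;> simp
  · intro v
    simp [indMat]

lemma prMat_indMat (X Y : Fin n → Fin c) : prMat (indMat X) Y = if Y = X then 1 else 0 := by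
  split_ifs with h
  · subst h
    simp [prMat, indMat]
  · obtain ⟨v, hv⟩ := Function.ne_iff.mp h
    exact prod_eq_zero (mem_univ v) (if_neg hv)

lemma sum_prMat_indMat_mul (X : Fin n → Fin c) (f : (Fin n → Fin c) → ℝ) :
    ∑ Y, prMat (indMat X) Y * f Y = f X := by
  simp [prMat_indMat]

lemma sum_prMat_indMat_not_mem (X : Fin n → Fin c) (C : Finset (Fin n → Fin c)) :
    ∑ Y ∈ univ.filter (fun Y => Y ∉ C), prMat (indMat X) Y = if X ∈ C then 0 else 1 := by
  simp [prMat_indMat]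

variable {ft : (Fin n → Fin c → ℝ) → ℝ}
  (hconc : ∀ p, IsRowStochastic p → ∀ i, ∑ r, p i r * ft (derMat p i r) ≤ ft p)
include hconc

lemma exists_derMat_le {p : Fin n → Fin c → ℝ} (hp : IsRowStochastic p) (i : Fin n) :
    ∃ r, ft (derMat p i r) ≤ ft p :=
  exists_le_of_sum_mul_le (fun r => (hp.1 i r).1) (hp.2 i) (hconc p hp i)

lemma exists_rows_indicator_le {p : Fin n → Fin c → ℝ} (hp : IsRowStochastic p)
    (s : Finset (Fin n)) :
    ∃ q, IsRowStochastic q ∧ ft q ≤ ft p ∧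
      ∀ v ∈ s, ∃ x, q v = fun y => if y = x then 1 else 0 := by
  induction s using Finset.induction_on with
  | empty => exact ⟨p, hp, le_rfl, by simp⟩
  | insert i s _ ih =>
    obtain ⟨q, hq, hqp, hrows⟩ := ih
    obtain ⟨r, hr⟩ := exists_derMat_le hconc hq i
    refine ⟨derMat q i r, hq.derMat i r, hr.trans hqp, ?_⟩
    intro v hv
    rcases eq_or_ne v i with rfl | hvi
    · exact ⟨r, Function.update_self ..⟩
    · obtain ⟨x, hx⟩ := hrows v ((mem_insert.mp hv).resolve_left hvi)
      exact ⟨x, (Function.update_of_ne hvi ..).trans hx⟩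

lemma exists_indMat_le {p : Fin n → Fin c → ℝ} (hp : IsRowStochastic p) :
    ∃ X : Fin n → Fin c, ft (indMat X) ≤ ft p := by
  obtain ⟨q, -, hqp, hrows⟩ := exists_rows_indicator_le hconc hp univ
  choose X hX using fun v => hrows v (mem_univ v)
  have hq : q = indMat X := funext hX
  exact ⟨X, hq ▸ hqp⟩

end Derandomization

theorem nonbinary_derandomization_guarantee_general
    (n c : ℕ) (f : (Fin n → Fin c) → ℝ) (hf : ∀ X, 0 ≤ f X)
    (C : Finset (Fin n → Fin c))
    (ft : (Fin n → Fin c → ℝ) → ℝ) (β : ℝ)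
    (hconc : ∀ p : Fin n → Fin c → ℝ,
      (∀ v r, p v r ∈ Set.Icc (0 : ℝ) 1) → (∀ v, ∑ r, p v r = 1) →
      ∀ i : Fin n, ∑ r : Fin c, p i r * ft (derMat p i r) ≤ ft p)
    (hub : ∀ p : Fin n → Fin c → ℝ,
      (∀ v r, p v r ∈ Set.Icc (0 : ℝ) 1) → (∀ v, ∑ r, p v r = 1) →
      (∑ X : Fin n → Fin c, prMat p X * f X)
        + β * (∑ X ∈ Finset.univ.filter (fun X : Fin n → Fin c => X ∉ C), prMat p X)
        ≤ ft p)
    (pinit : Fin n → Fin c → ℝ)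
    (h1 : ∀ v r, pinit v r ∈ Set.Icc (0 : ℝ) 1) (h2 : ∀ v, ∑ r, pinit v r = 1)
    (hβ1 : ft pinit < β) :
    ∃ X : Fin n → Fin c, X ∈ C ∧ f X ≤ ft pinit := by
  obtain ⟨X, hX⟩ := exists_indMat_le (fun p hp => hconc p hp.1 hp.2) ⟨h1, h2⟩
  have hbound := hub (indMat X) (isRowStochastic_indMat X).1 (isRowStochastic_indMat X).2
  rw [sum_prMat_indMat_mul, sum_prMat_indMat_not_mem] at hbound
  by_cases hXC : X ∈ C
  · refine ⟨X, hXC, ?_⟩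
    rw [if_pos hXC, mul_zero, add_zero] at hbound
    exact hbound.trans hX
  · rw [if_neg hXC, mul_one] at hbound
    linarith [hf X]

/-- non-binary derandomization guarantee: if `f` is non-negative, `f̃` is
non-negative and entry-wise concave (non-binary sense) on the set `S` of row-stochastic
matrices, `f̃(p) ≥ E_{X∼p} f(X) + β · Pr_{X∼p}[X ∉ C]` on `S`, and
`β > max(f̃(p_init), max_{X∈C} f(X))`, then there is a discrete decision `X ∈ C` with
`f(X) ≤ f̃(p_init)`. -/
theorem nonbinary_derandomization_guarantee
    (n c : ℕ) (f : (Fin n → Fin c) → ℝ) (hf : ∀ X, 0 ≤ f X)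
    (C : Finset (Fin n → Fin c))
    (ft : (Fin n → Fin c → ℝ) → ℝ) (β : ℝ)
    (hftnn : ∀ p : Fin n → Fin c → ℝ,
      (∀ v r, p v r ∈ Set.Icc (0 : ℝ) 1) → (∀ v, ∑ r, p v r = 1) → 0 ≤ ft p)
    (hconc : ∀ p : Fin n → Fin c → ℝ,
      (∀ v r, p v r ∈ Set.Icc (0 : ℝ) 1) → (∀ v, ∑ r, p v r = 1) →
      ∀ i : Fin n, ∑ r : Fin c, p i r * ft (derMat p i r) ≤ ft p)
    (hub : ∀ p : Fin n → Fin c → ℝ,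
      (∀ v r, p v r ∈ Set.Icc (0 : ℝ) 1) → (∀ v, ∑ r, p v r = 1) →
      (∑ X : Fin n → Fin c, prMat p X * f X)
        + β * (∑ X ∈ Finset.univ.filter (fun X : Fin n → Fin c => X ∉ C), prMat p X)
        ≤ ft p)
    (pinit : Fin n → Fin c → ℝ)
    (h1 : ∀ v r, pinit v r ∈ Set.Icc (0 : ℝ) 1) (h2 : ∀ v, ∑ r, pinit v r = 1)
    (hβ1 : ft pinit < β) (hβ2 : ∀ X ∈ C, f X < β) :
    ∃ X : Fin n → Fin c, X ∈ C ∧ f X ≤ ft pinit :=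
  nonbinary_derandomization_guarantee_general n c f hf C ft β hconc hub pinit h1 h2 hβ1
end
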